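/- Suppose ρ(A) > 0 and let W = I_m − αL with α a real number satisfying α > 0 and λ_2^{-1}(1 − ρ(A)^{-1}) < α < λ_m^{-1}(1 + ρ(A)^{-1}). If μ_W is a real eigenvalue of W and μ_A is a complex eigenvalue of A such that |μ_W μ_A| ≥ 1, then μ_W = 1. -/

import Mathlib

/-!
If `W v = μ_W v` with `W = I - αL`, then `v` is an eigenvector of `L` for
`λ = (1 - μ_W)/α`, so `λ` is one of the Laplacian eigenvalues `λ_i`. For `λ = λ_1 = 0` we get
`μ_W = 1`. Otherwise `λ_2 ≤ λ ≤ λ_m`, and the bounds on `α` squeeze `μ_W = 1 - αλ` into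
`(-ρ(A)⁻¹, ρ(A)⁻¹)`, so `|μ_W μ_A| < ρ(A)⁻¹ ρ(A) = 1`.
-/

open Matrix Kronecker Polynomial

namespace Matrix

variable {ι K : Type*} [Fintype ι] [DecidableEq ι]

theorem isRoot_charpoly_of_mulVec_eq_smul [CommRing K] [IsDomain K] {M : Matrix ι ι K}
    {v : ι → K} {μ : K} (hv : v ≠ 0) (h : M *ᵥ v = μ • v) : M.charpoly.IsRoot μ := by
  rw [IsRoot, eval_charpoly, ← exists_mulVec_eq_zero_iff]
  refine ⟨v, hv, ?_⟩
  rw [sub_mulVec, h, scalar_apply]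
  ext i
  simp

theorem mulVec_eq_smul_of_one_sub_smul_mulVec_eq_smul [Field K] {L : Matrix ι ι K}
    {v : ι → K} {α μ : K} (hα : α ≠ 0) (h : (1 - α • L) *ᵥ v = μ • v) :
    L *ᵥ v = (α⁻¹ * (1 - μ)) • v := by
  rw [sub_mulVec, one_mulVec, smul_mulVec, sub_eq_iff_eq_add, ← sub_eq_iff_eq_add'] at h
  rw [mul_smul, sub_smul, one_smul, h, smul_smul, inv_mul_cancel₀ hα, one_smul]

end Matrix

theorem Polynomial.exists_eq_of_isRoot_prod_X_sub_C {ι R : Type*} [Fintype ι] [CommRing R]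
    [IsDomain R] {e : ι → R} {x : R} (h : (∏ i, (X - C (e i))).IsRoot x) : ∃ i, x = e i := by
  obtain ⟨i, -, hi⟩ := (isRoot_prod _ _ x).mp h
  exact ⟨i, (root_X_sub_C.mp hi).symm⟩

theorem abs_one_sub_mul_lt_inv {lo hi t α r : ℝ} (hlo : 0 < lo) (hα : 0 < α)
    (hlo_t : lo ≤ t) (ht_hi : t ≤ hi)
    (hα_lo : lo⁻¹ * (1 - r⁻¹) < α) (hα_hi : α < hi⁻¹ * (1 + r⁻¹)) :
    |1 - α * t| < r⁻¹ := by
  have hhi : 0 < hi := hlo.trans_le (hlo_t.trans ht_hi)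
  rw [inv_mul_eq_div, div_lt_iff₀ hlo] at hα_lo
  rw [inv_mul_eq_div, lt_div_iff₀ hhi] at hα_hi
  rw [abs_lt]
  constructor <;> nlinarith

theorem Complex.norm_ofReal_mul_lt_one {w r : ℝ} {z : ℂ} (hr : 0 < r) (hw : |w| < r⁻¹)
    (hz : ‖z‖ ≤ r) : ‖(w : ℂ) * z‖ < 1 :=
  calc ‖(w : ℂ) * z‖ = |w| * ‖z‖ := by rw [norm_mul, norm_real, Real.norm_eq_abs]
    _ ≤ |w| * r := by gcongr
    _ < r⁻¹ * r := by gcongr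
    _ = 1 := inv_mul_cancel₀ hr.ne'

/-- With L the Laplacian of a connected graph on m > 2 vertices,
eigenvalues 0 = λ₁ < λ₂ ≤ ⋯ ≤ λₘ, ρ(A) > 0, and W = I − αL with α > 0 and
λ₂⁻¹(1 − ρ(A)⁻¹) < α < λₘ⁻¹(1 + ρ(A)⁻¹): if μ_W is a real eigenvalue of W and μ_A a
complex eigenvalue of A with |μ_W μ_A| ≥ 1, then μ_W = 1. -/
theorem stmt6 (m n : ℕ) (hm : 2 < m)
    (L : Matrix (Fin m) (Fin m) ℝ)
    (eig : Fin m → ℝ) (heig_mono : Monotone eig)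
    (hchar : L.charpoly = ∏ i, (X - C (eig i)))
    (heig0 : eig ⟨0, by omega⟩ = 0) (heig1 : 0 < eig ⟨1, by omega⟩)
    (A : Matrix (Fin n) (Fin n) ℝ)
    -- ρA is the spectral radius of A
    (ρA : ℝ) (hρ_pos : 0 < ρA)
    (hρ_ub : ∀ μ : ℂ, (∃ v : Fin n → ℂ, v ≠ 0 ∧
        (A.map Complex.ofReal).mulVec v = μ • v) → ‖μ‖ ≤ ρA)
    (α : ℝ) (hα_pos : 0 < α)
    (hα_lo : (eig ⟨1, by omega⟩)⁻¹ * (1 - ρA⁻¹) < α)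
    (hα_hi : α < (eig ⟨m - 1, by omega⟩)⁻¹ * (1 + ρA⁻¹))
    (W : Matrix (Fin m) (Fin m) ℝ) (hW : W = 1 - α • L)
    (μW : ℝ) (hμW : ∃ v : Fin m → ℝ, v ≠ 0 ∧ W.mulVec v = μW • v)
    (μA : ℂ) (hμA : ∃ v : Fin n → ℂ, v ≠ 0 ∧
      (A.map Complex.ofReal).mulVec v = μA • v)
    (hmod : 1 ≤ ‖(μW : ℂ) * μA‖) :
    μW = 1 := by
  obtain ⟨v, hv, hWv⟩ := hμW
  subst hW
  set lam := α⁻¹ * (1 - μW)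
  have hμW_eq : μW = 1 - α * lam := by simp only [lam]; field_simp; ring
  have hLv : L *ᵥ v = lam • v := mulVec_eq_smul_of_one_sub_smul_mulVec_eq_smul hα_pos.ne' hWv
  obtain ⟨i, hi⟩ : ∃ i, lam = eig i :=
    exists_eq_of_isRoot_prod_X_sub_C (hchar ▸ isRoot_charpoly_of_mulVec_eq_smul hv hLv)
  rcases Nat.eq_zero_or_pos i.val with hi0 | hi_pos
  · rw [hμW_eq, hi, show i = ⟨0, by omega⟩ from Fin.ext hi0, heig0, mul_zero, sub_zero]
  · have hlo : eig ⟨1, by omega⟩ ≤ lam := hi ▸ heig_mono (Fin.mk_le_of_le_val hi_pos)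
    have hhi : lam ≤ eig ⟨m - 1, by omega⟩ :=
      hi ▸ heig_mono (Fin.le_def.mpr (by simp only; omega))
    have hμW_small : |μW| < ρA⁻¹ :=
      hμW_eq ▸ abs_one_sub_mul_lt_inv heig1 hα_pos hlo hhi hα_lo hα_hi
    exact absurd hmod (Complex.norm_ofReal_mul_lt_one hρ_pos hμW_small (hρ_ub μA hμA)).not_ge
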